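/- Let ρ be a symmetric probability measure on ℝ (invariant under x ↦ -x) with finite first moment. Then ρ is a fixed point of LL_d if and only if it is a fixed point of LL⁺_d; in fact LL⁺_d(ρ) = LL_d(ρ) for every symmetric ρ. -/

import Mathlib

open MeasureTheory ProbabilityTheory Real
open scoped NNReal ENNReal

/-- Codomain family: one `ℕ`-valued variable (the Poisson count) and, for each `n : ℕ`,
three real variables `ηₙ, sₙ, sₙ'`. -/
abbrev llCod : Unit ⊕ (ℕ × Fin 3) → Type := Sum.elim (fun _ => ℕ) (fun _ => ℝ)

def llMS : ∀ i : Unit ⊕ (ℕ × Fin 3), MeasurableSpace (llCod i)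
  | Sum.inl _ => (inferInstance : MeasurableSpace ℕ)
  | Sum.inr _ => (inferInstance : MeasurableSpace ℝ)

def llFam {Ω : Type*} (D : Ω → ℕ) (η s s' : ℕ → Ω → ℝ) :
    ∀ i : Unit ⊕ (ℕ × Fin 3), Ω → llCod i
  | Sum.inl _ => D
  | Sum.inr (n, j) => if j = 0 then η n else if j = 1 then s n else s' n

/-- The uniform distribution on the two signs `{±1} ⊆ ℝ`. -/
noncomputable def signLaw : Measure ℝ :=
  (1 / 2 : ℝ≥0∞) • Measure.dirac (1 : ℝ) + (1 / 2 : ℝ≥0∞) • Measure.dirac (-1 : ℝ)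

/-!
Conditionally on the signs, a summand of `LL_d` is `± log ((1 ± tanh (η/2)) / 2)` with the four
sign patterns equally likely, and a summand of `LL⁺_d` is `log ((1 + tanh (η/2)) / 2)` or
`-log ((1 - tanh (η/2)) / 2)` with probability `1/2` each. Since `η ↦ -η` preserves `ρ` and flips
the sign of `tanh (η/2)`, both summands are the equal mixture of these two laws. Independence
carries this equality of laws to the partial sums, whose laws are convolutions, and then,
conditioning on the independent count `D`, to the random sums.
-/

@[fun_prop]
lemma Real.measurable_tanh : Measurable tanh := by
  rw [show tanh = sinh / cosh from funext tanh_eq_sinh_div_cosh]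
  exact measurable_sinh.div measurable_cosh

instance : IsProbabilityMeasure signLaw := by
  constructor
  simp [signLaw, ENNReal.inv_two_add_inv_two]

lemma map_prod_signLaw {α β : Type*} [MeasurableSpace α] [MeasurableSpace β] (μ : Measure α)
    [SFinite μ] {g : α × ℝ → β} (hg : Measurable g) :
    (μ.prod signLaw).map g =
      (1 / 2 : ℝ≥0∞) • μ.map (fun x => g (x, 1)) + (1 / 2 : ℝ≥0∞) • μ.map (fun x => g (x, -1)) := by
  rw [signLaw, Measure.prod_add, Measure.prod_smul_right, Measure.prod_smul_right,
    Measure.prod_dirac, Measure.prod_dirac, Measure.map_add _ _ hg, Measure.map_smul,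
    Measure.map_smul, Measure.map_map hg measurable_prodMk_right,
    Measure.map_map hg measurable_prodMk_right]
  rfl

lemma map_comp_neg_of_map_neg_eq {β : Type*} [MeasurableSpace β] {ρ : Measure ℝ}
    (hsym : ρ.map (fun x => -x) = ρ) {f : ℝ → β} (hf : Measurable f) :
    ρ.map (fun x => f (-x)) = ρ.map f := by
  conv_rhs => rw [← hsym, Measure.map_map hf measurable_neg]
  rfl

-- A point `((η, s), s')` of `(ℝ × ℝ) × ℝ` carries the variables of one summand.
noncomputable def llTerm (x : (ℝ × ℝ) × ℝ) : ℝ :=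
  x.1.2 * log ((1 + x.2 * tanh (x.1.1 / 2)) / 2)

noncomputable def llPlusTerm (x : (ℝ × ℝ) × ℝ) : ℝ :=
  -(x.1.2 * log ((1 - x.1.2 * tanh (x.1.1 / 2)) / 2))

@[fun_prop]
lemma measurable_llTerm : Measurable llTerm := by
  unfold llTerm; fun_prop

@[fun_prop]
lemma measurable_llPlusTerm : Measurable llPlusTerm := by
  unfold llPlusTerm; fun_prop

theorem map_llPlusTerm_eq_map_llTerm {ρ : Measure ℝ} [SFinite ρ]
    (hsym : ρ.map (fun x => -x) = ρ) :
    ((ρ.prod signLaw).prod signLaw).map llPlusTerm =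
      ((ρ.prod signLaw).prod signLaw).map llTerm := by
  have hA : ρ.map (fun x => log ((1 - tanh (x / 2)) / 2)) =
      ρ.map (fun x => log ((1 + tanh (x / 2)) / 2)) := by
    rw [← map_comp_neg_of_map_neg_eq hsym (by fun_prop)]
    simp only [neg_div, tanh_neg, sub_neg_eq_add]
  have hB : ρ.map (fun x => -log ((1 + tanh (x / 2)) / 2)) =
      ρ.map (fun x => -log ((1 - tanh (x / 2)) / 2)) := by
    rw [← map_comp_neg_of_map_neg_eq hsym (by fun_prop)]
    simp only [neg_div, tanh_neg, ← sub_eq_add_neg]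
  simp (disch := fun_prop) only [map_prod_signLaw]
  simp only [llTerm, llPlusTerm, one_mul, neg_mul, neg_neg, sub_neg_eq_add, ← sub_eq_add_neg,
    hA, hB]
  ac_rfl

section RandomSum

variable {Ω β : Type*} [MeasurableSpace Ω] [MeasurableSpace β] {P : Measure Ω}

lemma measurable_apply_index {N : Ω → ℕ} {S : ℕ → Ω → β} (hN : Measurable N)
    (hS : ∀ n, Measurable (S n)) : Measurable fun ω => S (N ω) ω :=
  (measurable_from_prod_countable_left (f := fun p : Ω × ℕ => S p.2 p.1) hS).comp
    (measurable_id.prodMk hN)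

lemma measure_preimage_apply_index {N : Ω → ℕ} {S : ℕ → Ω → β} (hN : Measurable N)
    (hS : ∀ n, Measurable (S n)) {A : Set β} (hA : MeasurableSet A) :
    P ((fun ω => S (N ω) ω) ⁻¹' A) = ∑' n, P (N ⁻¹' {n} ∩ S n ⁻¹' A) := by
  have hdecomp : (fun ω => S (N ω) ω) ⁻¹' A = ⋃ n, N ⁻¹' {n} ∩ S n ⁻¹' A := by
    ext ω
    simp
  rw [hdecomp, measure_iUnion]
  · exact fun m n hmn => ((Set.disjoint_singleton.2 hmn).preimage N).mono
      Set.inter_subset_left Set.inter_subset_left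
  · exact fun n => (hN (measurableSet_singleton n)).inter (hS n hA)

theorem map_apply_index_eq {N : Ω → ℕ} {S T : ℕ → Ω → β} (hN : Measurable N)
    (hS : ∀ n, Measurable (S n)) (hT : ∀ n, Measurable (T n))
    (hNS : ∀ n, N ⟂ᵢ[P] S n) (hNT : ∀ n, N ⟂ᵢ[P] T n)
    (hST : ∀ n, P.map (S n) = P.map (T n)) :
    P.map (fun ω => S (N ω) ω) = P.map (fun ω => T (N ω) ω) := by
  ext A hA
  rw [Measure.map_apply (measurable_apply_index hN hS) hA,
    Measure.map_apply (measurable_apply_index hN hT) hA,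
    measure_preimage_apply_index hN hS hA, measure_preimage_apply_index hN hT hA]
  refine tsum_congr fun n => ?_
  rw [(hNS n).measure_inter_preimage_eq_mul _ _ (measurableSet_singleton n) hA,
    (hNT n).measure_inter_preimage_eq_mul _ _ (measurableSet_singleton n) hA,
    ← Measure.map_apply (hS n) hA, ← Measure.map_apply (hT n) hA, hST n]

variable {M : Type*} [AddCommMonoid M] [MeasurableSpace M] [MeasurableAdd₂ M]
  [IsFiniteMeasure P] {X Y : ℕ → Ω → M}

theorem map_sum_range_eq_of_indepFun (hX : ∀ n, Measurable (X n)) (hY : ∀ n, Measurable (Y n))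
    (hXinc : ∀ n, (fun ω => ∑ i ∈ Finset.range n, X i ω) ⟂ᵢ[P] X n)
    (hYinc : ∀ n, (fun ω => ∑ i ∈ Finset.range n, Y i ω) ⟂ᵢ[P] Y n)
    (hXY : ∀ n, P.map (X n) = P.map (Y n)) (n : ℕ) :
    P.map (fun ω => ∑ i ∈ Finset.range n, X i ω) =
      P.map (fun ω => ∑ i ∈ Finset.range n, Y i ω) := by
  induction n with
  | zero => simp
  | succ n ih =>
    simp only [Finset.sum_range_succ]
    calc P.map (fun ω => ∑ i ∈ Finset.range n, X i ω + X n ω)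
        = P.map (fun ω => ∑ i ∈ Finset.range n, X i ω) ∗ P.map (X n) :=
          (hXinc n).map_add_eq_map_conv_map
            (Finset.measurable_sum _ fun i _ => hX i) (hX n)
      _ = P.map (fun ω => ∑ i ∈ Finset.range n, Y i ω) ∗ P.map (Y n) := by rw [ih, hXY n]
      _ = P.map (fun ω => ∑ i ∈ Finset.range n, Y i ω + Y n ω) :=
          ((hYinc n).map_add_eq_map_conv_map
            (Finset.measurable_sum _ fun i _ => hY i) (hY n)).symm

theorem map_randomSum_eq {N : Ω → ℕ} (hN : Measurable N)
    (hX : ∀ n, Measurable (X n)) (hY : ∀ n, Measurable (Y n))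
    (hXinc : ∀ n, (fun ω => ∑ i ∈ Finset.range n, X i ω) ⟂ᵢ[P] X n)
    (hYinc : ∀ n, (fun ω => ∑ i ∈ Finset.range n, Y i ω) ⟂ᵢ[P] Y n)
    (hNX : ∀ n, N ⟂ᵢ[P] fun ω => ∑ i ∈ Finset.range n, X i ω)
    (hNY : ∀ n, N ⟂ᵢ[P] fun ω => ∑ i ∈ Finset.range n, Y i ω)
    (hXY : ∀ n, P.map (X n) = P.map (Y n)) :
    P.map (fun ω => ∑ i ∈ Finset.range (N ω), X i ω) =
      P.map (fun ω => ∑ i ∈ Finset.range (N ω), Y i ω) :=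
  map_apply_index_eq (S := fun n ω => ∑ i ∈ Finset.range n, X i ω)
    (T := fun n ω => ∑ i ∈ Finset.range n, Y i ω) hN
    (fun _ => Finset.measurable_sum _ fun i _ => hX i)
    (fun _ => Finset.measurable_sum _ fun i _ => hY i) hNX hNY
    (map_sum_range_eq_of_indepFun hX hY hXinc hYinc hXY)

end RandomSum

section Regrouping

variable {Ω ι : Type*} {β : ι → Type*} {mβ : ∀ i, MeasurableSpace (β i)} {f : ∀ i, Ω → β i}

lemma measurable_iSup_comap_of_mem {S : Set ι} {i : ι} (hi : i ∈ S) :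
    Measurable[⨆ j ∈ S, (mβ j).comap (f j)] (f i) :=
  (comap_measurable (f i)).mono (le_iSup₂ (f := fun j _ => (mβ j).comap (f j)) i hi) le_rfl

variable [MeasurableSpace Ω] {P : Measure Ω}

lemma ProbabilityTheory.iIndepFun.indepFun_of_measurable_iSup (h : iIndepFun f P)
    (hf : ∀ i, Measurable (f i)) {S T : Set ι} (hST : Disjoint S T) {γ δ : Type*} [MeasurableSpace γ] [MeasurableSpace δ]
    {φ : Ω → γ} {ψ : Ω → δ} (hφ : Measurable[⨆ i ∈ S, (mβ i).comap (f i)] φ)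
    (hψ : Measurable[⨆ i ∈ T, (mβ i).comap (f i)] ψ) : φ ⟂ᵢ[P] ψ := by
  rw [IndepFun_iff_Indep]
  exact indep_of_indep_of_le_right (indep_of_indep_of_le_left
    (indep_iSup_of_disjoint (fun i => (hf i).comap_le) h hST) hφ.comap_le) hψ.comap_le

end Regrouping

section LLFamily

variable {Ω : Type*} {D : Ω → ℕ} {η s s' : ℕ → Ω → ℝ}

def llTriple (η s s' : ℕ → Ω → ℝ) (n : ℕ) (ω : Ω) : (ℝ × ℝ) × ℝ :=
  ((η n ω, s n ω), s' n ω)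

lemma measurable_llTriple_iSup {I : Set ℕ} {n : ℕ} (hn : n ∈ I) :
    Measurable[⨆ i ∈ Sum.inr '' (Prod.fst ⁻¹' I), (llMS i).comap (llFam D η s s' i)]
      (llTriple η s s' n) := by
  have h : ∀ j : Fin 3, Measurable[⨆ i ∈ Sum.inr '' (Prod.fst ⁻¹' I),
      (llMS i).comap (llFam D η s s' i), llMS (Sum.inr (n, j))] (llFam D η s s' (Sum.inr (n, j))) :=
    fun j => measurable_iSup_comap_of_mem ⟨(n, j), hn, rfl⟩
  exact ((h 0).prodMk (h 1)).prodMk (h 2)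

variable [MeasurableSpace Ω] {P : Measure Ω}

lemma measurable_llFam (measD : Measurable D) (measη : ∀ n, Measurable (η n))
    (meass : ∀ n, Measurable (s n)) (meass' : ∀ n, Measurable (s' n)) :
    ∀ i, Measurable[_, llMS i] (llFam D η s s' i)
  | Sum.inl _ => measD
  | Sum.inr (n, j) => by
    fin_cases j
    exacts [measη n, meass n, meass' n]

lemma indepFun_sum_llTriple (indep : iIndepFun (m := llMS) (llFam D η s s') P)
    (hfam : ∀ i, Measurable[_, llMS i] (llFam D η s s' i))
    {g : (ℝ × ℝ) × ℝ → ℝ} (hg : Measurable g) (n : ℕ) :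
    (fun ω => ∑ i ∈ Finset.range n, g (llTriple η s s' i ω)) ⟂ᵢ[P]
      fun ω => g (llTriple η s s' n ω) := by
  refine indep.indepFun_of_measurable_iSup hfam (S := Sum.inr '' (Prod.fst ⁻¹' Set.Iio n))
    (T := Sum.inr '' (Prod.fst ⁻¹' {n})) ?_ ?_ ?_
  · simpa [Set.disjoint_left] using fun i (hi : i < n) => hi.ne'
  · exact Finset.measurable_sum _ fun i hi =>
      hg.comp (measurable_llTriple_iSup (Finset.mem_range.1 hi))
  · exact hg.comp (measurable_llTriple_iSup rfl)

lemma indepFun_count_sum_llTriple (indep : iIndepFun (m := llMS) (llFam D η s s') P)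
    (hfam : ∀ i, Measurable[_, llMS i] (llFam D η s s' i))
    {g : (ℝ × ℝ) × ℝ → ℝ} (hg : Measurable g) (n : ℕ) :
    D ⟂ᵢ[P] fun ω => ∑ i ∈ Finset.range n, g (llTriple η s s' i ω) := by
  refine indep.indepFun_of_measurable_iSup hfam (S := {Sum.inl ()})
    (T := Sum.inr '' (Prod.fst ⁻¹' Set.Iio n)) ?_ ?_ ?_
  · simp
  · exact measurable_iSup_comap_of_mem (mβ := llMS) (f := llFam D η s s')
      (Set.mem_singleton (Sum.inl ()))
  · exact Finset.measurable_sum _ fun i hi =>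
      hg.comp (measurable_llTriple_iSup (Finset.mem_range.1 hi))

lemma map_llTriple [IsFiniteMeasure P] (indep : iIndepFun (m := llMS) (llFam D η s s') P)
    (hfam : ∀ i, Measurable[_, llMS i] (llFam D η s s' i)) {μ ν ν' : Measure ℝ} (n : ℕ)
    (lawη : P.map (η n) = μ) (laws : P.map (s n) = ν) (laws' : P.map (s' n) = ν') :
    P.map (llTriple η s s' n) = (μ.prod ν).prod ν' := by
  have hηs : η n ⟂ᵢ[P] s n :=
    indep.indepFun (show (Sum.inr (n, 0) : Unit ⊕ ℕ × Fin 3) ≠ Sum.inr (n, 1) by simp)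
  have hηs_s' : (fun ω => (η n ω, s n ω)) ⟂ᵢ[P] s' n :=
    indep.indepFun_prodMk hfam (Sum.inr (n, 0)) (Sum.inr (n, 1)) (Sum.inr (n, 2))
      (by simp) (by simp)
  have hη : Measurable (η n) := hfam (.inr (n, 0))
  have hs : Measurable (s n) := hfam (.inr (n, 1))
  have hs' : Measurable (s' n) := hfam (.inr (n, 2))
  change P.map (fun ω => ((η n ω, s n ω), s' n ω)) = _
  rw [(indepFun_iff_map_prod_eq_prod_map_map (hη.prodMk hs).aemeasurable
      hs'.aemeasurable).1 hηs_s',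
    (indepFun_iff_map_prod_eq_prod_map_map hη.aemeasurable hs.aemeasurable).1 hηs,
    lawη, laws, laws']

end LLFamily

theorem stmt_10_general
    (ρ : Measure ℝ) [IsProbabilityMeasure ρ]
    (hsym : ρ.map (fun x => -x) = ρ)
    {Ω : Type*} [MeasurableSpace Ω] (P : Measure Ω) [IsProbabilityMeasure P]
    (D : Ω → ℕ) (η s s' : ℕ → Ω → ℝ)
    (measD : Measurable D) (measη : ∀ n, Measurable (η n))
    (meass : ∀ n, Measurable (s n)) (meass' : ∀ n, Measurable (s' n))
    (lawη : ∀ n, P.map (η n) = ρ)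
    (laws : ∀ n, P.map (s n) = signLaw) (laws' : ∀ n, P.map (s' n) = signLaw)
    (indep : iIndepFun (m := llMS) (llFam D η s s') P) :
    P.map (fun ω => -∑ i ∈ Finset.range (D ω),
        s i ω * Real.log ((1 - s i ω * Real.tanh (η i ω / 2)) / 2)) =
      P.map (fun ω => ∑ i ∈ Finset.range (D ω),
        s i ω * Real.log ((1 + s' i ω * Real.tanh (η i ω / 2)) / 2)) ∧
    ((P.map (fun ω => -∑ i ∈ Finset.range (D ω),
        s i ω * Real.log ((1 - s i ω * Real.tanh (η i ω / 2)) / 2)) = ρ) ↔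
      (P.map (fun ω => ∑ i ∈ Finset.range (D ω),
        s i ω * Real.log ((1 + s' i ω * Real.tanh (η i ω / 2)) / 2)) = ρ)) := by
  have hfam := measurable_llFam measD measη meass meass'
  have hW (n : ℕ) : Measurable (llTriple η s s' n) :=
    ((measη n).prodMk (meass n)).prodMk (meass' n)
  have hterm (n : ℕ) : P.map (llPlusTerm ∘ llTriple η s s' n) =
      P.map (llTerm ∘ llTriple η s s' n) := by
    rw [← Measure.map_map measurable_llPlusTerm (hW n), ← Measure.map_map measurable_llTerm (hW n),
      map_llTriple indep hfam n (lawη n) (laws n) (laws' n), map_llPlusTerm_eq_map_llTerm hsym]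
  have hsum := map_randomSum_eq measD (fun n => measurable_llPlusTerm.comp (hW n))
    (fun n => measurable_llTerm.comp (hW n))
    (indepFun_sum_llTriple indep hfam measurable_llPlusTerm)
    (indepFun_sum_llTriple indep hfam measurable_llTerm)
    (indepFun_count_sum_llTriple indep hfam measurable_llPlusTerm)
    (indepFun_count_sum_llTriple indep hfam measurable_llTerm) hterm
  have hneg : (fun ω => -∑ i ∈ Finset.range (D ω),
      s i ω * Real.log ((1 - s i ω * Real.tanh (η i ω / 2)) / 2)) =
      fun ω => ∑ i ∈ Finset.range (D ω), llPlusTerm (llTriple η s s' i ω) := by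
    simp only [llPlusTerm, llTriple, Finset.sum_neg_distrib]
  rw [hneg]
  exact ⟨hsum, Iff.of_eq (congrArg (· = ρ) hsum)⟩

/-- Let `ρ` be a symmetric probability measure on `ℝ` with finite first moment.  With
`D ~ Poisson(d)`, `ηᵢ` i.i.d. with law `ρ` and `sᵢ, sᵢ'` independent uniform signs, all
jointly independent, the law `LL⁺_d(ρ)` of `-∑_{i<D} sᵢ log((1-sᵢ tanh(ηᵢ/2))/2)` equals
the law `LL_d(ρ)` of `∑_{i<D} sᵢ log((1+sᵢ' tanh(ηᵢ/2))/2)`; in particular `ρ` is a fixed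
point of `LL_d` if and only if it is a fixed point of `LL⁺_d`. -/
theorem stmt_10 (d : ℝ≥0) (hd0 : 0 < d)
    (ρ : Measure ℝ) [IsProbabilityMeasure ρ]
    (hsym : ρ.map (fun x => -x) = ρ)
    (hmom : ∫⁻ x, ENNReal.ofReal |x| ∂ρ < ∞)
    {Ω : Type*} [MeasurableSpace Ω] (P : Measure Ω) [IsProbabilityMeasure P]
    (D : Ω → ℕ) (η s s' : ℕ → Ω → ℝ)
    (measD : Measurable D) (measη : ∀ n, Measurable (η n))
    (meass : ∀ n, Measurable (s n)) (meass' : ∀ n, Measurable (s' n))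
    (lawD : P.map D = (poissonPMF d).toMeasure)
    (lawη : ∀ n, P.map (η n) = ρ)
    (laws : ∀ n, P.map (s n) = signLaw) (laws' : ∀ n, P.map (s' n) = signLaw)
    (indep : iIndepFun (m := llMS) (llFam D η s s') P) :
    P.map (fun ω => -∑ i ∈ Finset.range (D ω),
        s i ω * Real.log ((1 - s i ω * Real.tanh (η i ω / 2)) / 2)) =
      P.map (fun ω => ∑ i ∈ Finset.range (D ω),
        s i ω * Real.log ((1 + s' i ω * Real.tanh (η i ω / 2)) / 2)) ∧
    ((P.map (fun ω => -∑ i ∈ Finset.range (D ω),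
        s i ω * Real.log ((1 - s i ω * Real.tanh (η i ω / 2)) / 2)) = ρ) ↔
      (P.map (fun ω => ∑ i ∈ Finset.range (D ω),
        s i ω * Real.log ((1 + s' i ω * Real.tanh (η i ω / 2)) / 2)) = ρ)) :=
  stmt_10_general ρ hsym P D η s s' measD measη meass meass' lawη laws laws' indep
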